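/- arXiv:1807.01098 — 2 statements merged into one kernel-verified Lean document; each statement's English description precedes it below -/
import Mathlib

section
/- Let G' = (V, E') be a finite directed acyclic graph with sources s_1,…,s_n (with rates r_1,…,r_n > 0), a sink t, capacities ν_e > 0, and a subset E* ⊆ E' of resetting arcs, such that every node is reachable from some source in G'. Suppose (x'_i)_{i=1}^n with x'_i ≥ 0 and Σ x'_i = 1, a static flow (x'_e)_{e∈E'} routing x'_i units from each s_i to t, and labels (ℓ'_v)_{v∈V} form a thin flow with resetting, i.e.: ℓ'_{s_i} = x'_i / r_i; ℓ'_{s_i} ≤ min over incoming arcs e=(u,s_i)∈E' of ρ_e(ℓ'_u, x'_e); ℓ'_v = min over incoming arcs e=(u,v)∈E' of ρ_e(ℓ'_u, x'_e) for v not a source; and ℓ'_v = ρ_e(ℓ'_u, x'_e) whenever x'_e > 0; where ρ_e(ℓ'_u, x'_e) = x'_e/ν_e if e ∈ E* and max{ℓ'_u, x'_e/ν_e} otherwise. Let σ = min{min_e ν_e, min_i r_i}. Then ℓ'_v ≤ 1/σ for every v ∈ V. -/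
/-- Net outflow of a static flow `x` at node `v` in the arc set `E'`. -/
def netOut {V : Type*} [DecidableEq V] (E' : Finset (V × V)) (x : V × V → ℝ) (v : V) : ℝ :=
  (∑ e ∈ E'.filter (fun e => e.1 = v), x e) - ∑ e ∈ E'.filter (fun e => e.2 = v), x e

/-- The arc set `E'` contains no directed cycle. -/
def NoCycle {V : Type*} (E' : Finset (V × V)) : Prop :=
  ∀ (k : ℕ) (w : Fin (k+1) → V), 0 < k →
    (∀ i : Fin k, (w i.castSucc, w i.succ) ∈ E') → w 0 ≠ w (Fin.last k)

/-- Every node is reachable from the set `S` along arcs of `E'`. -/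
def ReachesAll {V : Type*} (E' : Finset (V × V)) (S : Set V) : Prop :=
  ∀ v : V, ∃ (k : ℕ) (w : Fin (k+1) → V),
    w 0 ∈ S ∧ w (Fin.last k) = v ∧ ∀ i : Fin k, (w i.castSucc, w i.succ) ∈ E'

private lemma transGen_walk {V : Type*} (E' : Finset (V × V)) {a b : V}
    (h : Relation.TransGen (fun u v => (u, v) ∈ E') a b) :
    ∃ (k : ℕ) (w : Fin (k+1) → V), 0 < k ∧ w 0 = a ∧ w (Fin.last k) = b ∧
      ∀ i : Fin k, (w i.castSucc, w i.succ) ∈ E' := by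
  induction h with
  | @single c h =>
    refine ⟨1, ![a, c], one_pos, rfl, rfl, fun i => ?_⟩
    fin_cases i; simpa using h
  | @tail b c _ hbc ih =>
    obtain ⟨k, w, hk, h0, hl, he⟩ := ih
    refine ⟨k+1, Fin.snoc w c, Nat.succ_pos _, ?_, by simp, fun i => ?_⟩
    · have h00 : (0 : Fin (k+2)) = Fin.castSucc 0 := rfl
      rw [h00, Fin.snoc_castSucc]; exact h0
    · induction i using Fin.lastCases with
      | last =>
        have h1 : (Fin.last k).succ = Fin.last (k+1) := Fin.succ_last k
        rw [h1, Fin.snoc_last, Fin.snoc_castSucc, hl]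
        exact hbc
      | cast j =>
        have h1 : (Fin.castSucc j).succ = Fin.castSucc j.succ := Fin.succ_castSucc j
        rw [h1, Fin.snoc_castSucc, Fin.snoc_castSucc]
        exact he j

private lemma wf_edge {V : Type*} [Fintype V] (E' : Finset (V × V))
    (hacyc : NoCycle E') : WellFounded (fun u v => (u, v) ∈ E') := by
  have hirr : ∀ v : V, ¬ Relation.TransGen (fun u v => (u, v) ∈ E') v v := by
    intro v hv
    obtain ⟨k, w, hk, h0, hl, he⟩ := transGen_walk E' hv
    exact hacyc k w hk he (h0.trans hl.symm)
  have : WellFounded (Relation.TransGen (fun u v : V => (u, v) ∈ E')) := by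
    haveI : IsTrans V (Relation.TransGen (fun u v => (u, v) ∈ E')) :=
      ⟨fun _ _ _ => Relation.TransGen.trans⟩
    haveI : IsIrrefl V (Relation.TransGen (fun u v => (u, v) ∈ E')) := ⟨hirr⟩
    exact Finite.wellFounded_of_trans_of_irrefl _
  exact Subrelation.wf (fun h => Relation.TransGen.single h) this

/-- All node labels of a thin flow with resetting are bounded by `1/σ`. -/
theorem stmt_5 {V : Type*} [Fintype V] [DecidableEq V]
    (E' Estar : Finset (V × V)) (hEsub : Estar ⊆ E')
    (hacyc : NoCycle E')
    (n : ℕ) (hn : 0 < n) (s : Fin n → V) (hs : Function.Injective s) (t : V)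
    (hreach : ReachesAll E' (Set.range s))
    (r : Fin n → ℝ) (hr : ∀ i, 0 < r i)
    (ν : V × V → ℝ) (hν : ∀ e ∈ E', 0 < ν e)
    (xi : Fin n → ℝ) (x : V × V → ℝ) (ℓ : V → ℝ)
    (hxi0 : ∀ i, 0 ≤ xi i) (hxisum : ∑ i, xi i = 1)
    (hx0 : ∀ e, 0 ≤ x e) (hx1 : ∀ e, x e ≤ 1)
    (hsupp : ∀ e ∉ E', x e = 0)
    (hcons : ∀ v, (∀ i, v ≠ s i) → v ≠ t → netOut E' x v = 0)
    (hinjct : ∀ i, netOut E' x (s i) = xi i)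
    (ρ : V × V → ℝ)
    (hρ : ∀ e ∈ E', ρ e = if e ∈ Estar then x e / ν e else max (ℓ e.1) (x e / ν e))
    (hTF1 : ∀ i, ℓ (s i) = xi i / r i)
    (hTF2 : ∀ i, ∀ e ∈ E', e.2 = s i → ℓ (s i) ≤ ρ e)
    (hTF3a : ∀ v, (∀ i, v ≠ s i) → ∀ e ∈ E', e.2 = v → ℓ v ≤ ρ e)
    (hTF3b : ∀ v, (∀ i, v ≠ s i) → ∃ e ∈ E', e.2 = v ∧ ℓ v = ρ e)
    (hTF4 : ∀ e ∈ E', 0 < x e → ℓ e.2 = ρ e)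
    (σ : ℝ) (hσ : 0 < σ) (hσν : ∀ e ∈ E', σ ≤ ν e) (hσr : ∀ i, σ ≤ r i) :
    ∀ v, ℓ v ≤ 1 / σ := by
  intro v
  induction v using (wf_edge E' hacyc).induction with
  | _ v ih =>
  have hdiv : ∀ a c : ℝ, a ≤ 1 → σ ≤ c → a / c ≤ 1 / σ := fun a c ha hc =>
    div_le_div₀ zero_le_one ha hσ hc
  by_cases hv : ∃ i, v = s i
  · obtain ⟨i, rfl⟩ := hv
    rw [hTF1 i]
    refine hdiv _ _ ?_ (hσr i)
    calc xi i ≤ ∑ j, xi j :=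
          Finset.single_le_sum (fun j _ => hxi0 j) (Finset.mem_univ i)
      _ = 1 := hxisum
  · push_neg at hv
    obtain ⟨e, heE, hev, hle⟩ := hTF3b v hv
    rw [hle, hρ e heE]
    have hxν : x e / ν e ≤ 1 / σ := hdiv _ _ (hx1 e) (hσν e heE)
    split
    · exact hxν
    · refine max_le ?_ hxν
      refine ih e.1 ?_
      have : (e.1, v) ∈ E' := by rw [← hev]; exact heE
      exact this
end

section
/- In the setting of a thin flow with resetting on the extended graph Ḡ with super sink t and new arcs e_j = (t_j, t) of capacity ν_{e_j} = (1/2)·d_j·σ (where d_1+…+d_m = 1, all d_j > 0, and σ = min{min_{e∈E} ν_e, min_i r_i}), if all new arcs e_1,…,e_m belong to the shortest-paths arc set E', then x'_{e_j} = d_j for every j = 1,…,m. -/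
/-- In a thin flow with resetting on the extended graph, if all super-sink arcs
are active then the flow on each super-sink arc equals the corresponding demand. -/
theorem stmt_7 (m : ℕ) (d : Fin m → ℝ) (hd : ∀ j, 0 < d j) (hdsum : ∑ j, d j = 1)
    (σ : ℝ) (hσ : 0 < σ)
    (ν : Fin m → ℝ) (hνdef : ∀ j, ν j = 1/2 * d j * σ)
    (x : Fin m → ℝ) (hx0 : ∀ j, 0 ≤ x j) (hxsum : ∑ j, x j = 1)
    (ltj : Fin m → ℝ) (hltj : ∀ j, ltj j ≤ 1 / σ)
    (reset : Fin m → Prop) [DecidablePred reset]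
    (ρ : Fin m → ℝ)
    (hρ : ∀ j, ρ j = if reset j then x j / ν j else max (ltj j) (x j / ν j))
    (lt : ℝ) (hmin : ∀ j, lt ≤ ρ j) (hmin' : ∃ j, lt = ρ j)
    (htight : ∀ j, 0 < x j → lt = ρ j) :
    ∀ j, x j = d j := by
  by_contra h
  push_neg at h
  obtain ⟨j0, hj0⟩ := h
  have ha : ∃ a, d a < x a := by
    by_contra hA
    push_neg at hA
    have : ∑ j, x j < ∑ j, d j := by
      apply Finset.sum_lt_sum (fun j _ => hA j)
      exact ⟨j0, Finset.mem_univ _, lt_of_le_of_ne (hA j0) hj0⟩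
    linarith
  obtain ⟨a, haa⟩ := ha
  have hb : ∃ b, x b < d b := by
    by_contra hB
    push_neg at hB
    have : ∑ j, d j < ∑ j, x j :=
      Finset.sum_lt_sum (fun j _ => hB j) ⟨a, Finset.mem_univ _, haa⟩
    linarith
  obtain ⟨b, hbb⟩ := hb
  have hda := hd a; have hdb := hd b
  have hνa : ν a = 1/2 * d a * σ := hνdef a
  have hνapos : 0 < ν a := by rw [hνa]; positivity
  have hνbpos : 0 < ν b := by rw [hνdef b]; positivity
  have hxa0 : 0 < x a := lt_trans hda haa
  have hlt : lt = ρ a := htight a hxa0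
  have hρa : x a / ν a ≤ lt := by
    rw [hlt, hρ a]; split
    · exact le_refl _
    · exact le_max_right _ _
  have h2 : 2 / σ < x a / ν a := by
    rw [hνa, div_lt_div_iff₀ hσ (by positivity)]
    nlinarith
  have h3 : x b / ν b < lt := by
    have : x b / ν b < 2 / σ := by
      rw [hνdef b, div_lt_div_iff₀ (by positivity) hσ]
      nlinarith
    linarith
  have h1 : ltj b < lt := by
    have h12 : (1:ℝ)/σ < 2/σ := by
      rw [div_lt_div_iff₀ hσ hσ]; nlinarith
    have := hltj b
    linarith
  have hρb : ρ b < lt := by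
    rw [hρ b]; split
    · exact h3
    · exact max_lt h1 h3
  exact absurd (hmin b) (not_le.mpr hρb)
end
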